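/- arXiv:2306.02184 — 3 statements merged into one kernel-verified Lean document; each statement's English description precedes it below -/
import Mathlib

section
/- Let R be a commutative ring, n ≥ 1, and let B denote the ideal of the multivariate polynomial ring R[X_1,...,X_n] generated by the Boolean axioms {X_l^2 - X_l : 1 ≤ l ≤ n}. Suppose k_1, ..., k_m ∈ R[X_1,...,X_n] satisfy k_j^2 - k_j ∈ B for every j. Then for each index i, the polynomial 1 - k_i lies in the ideal of R[X_1,...,X_n] generated by the single polynomial 1 - ∏_{j=1}^m k_j together with the Boolean axioms {X_l^2 - X_l : 1 ≤ l ≤ n}. -/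
open MvPolynomial

/-- Over a commutative ring `R`, if `k 1, ..., k m ∈ R[X_1,...,X_n]` are each idempotent
modulo the ideal `B` generated by the Boolean axioms `X l ^ 2 - X l`, then for each `i`,
`1 - k i` lies in the ideal generated by `1 - ∏ j, k j` together with the Boolean axioms. -/
theorem stmt_1 (R : Type*) [CommRing R] (n m : ℕ) (hn : 1 ≤ n)
    (k : Fin m → MvPolynomial (Fin n) R)
    (hk : ∀ j : Fin m, k j ^ 2 - k j ∈
      Ideal.span (Set.range fun l : Fin n => (X l : MvPolynomial (Fin n) R) ^ 2 - X l)) :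
    ∀ i : Fin m, 1 - k i ∈
      Ideal.span (insert (1 - ∏ j : Fin m, k j)
        (Set.range fun l : Fin n => (X l : MvPolynomial (Fin n) R) ^ 2 - X l)) := by
  intro i
  set B := Ideal.span (Set.range fun l : Fin n => (X l : MvPolynomial (Fin n) R) ^ 2 - X l)
  set I := Ideal.span (insert (1 - ∏ j : Fin m, k j)
    (Set.range fun l : Fin n => (X l : MvPolynomial (Fin n) R) ^ 2 - X l))
  have hBI : B ≤ I := Ideal.span_mono (Set.subset_insert _ _)
  have hp : (1 - ∏ j : Fin m, k j) ∈ I :=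
    Ideal.subset_span (Set.mem_insert _ _)
  have key : (1 - k i) * ∏ j : Fin m, k j ∈ B := by
    rw [← Finset.mul_prod_erase Finset.univ k (Finset.mem_univ i)]
    have : (1 - k i) * (k i * ∏ j ∈ Finset.univ.erase i, k j)
        = -(∏ j ∈ Finset.univ.erase i, k j) * (k i ^ 2 - k i) := by ring
    rw [this]
    exact Ideal.mul_mem_left _ _ (hk i)
  have : 1 - k i = (1 - k i) * (1 - ∏ j : Fin m, k j) + (1 - k i) * ∏ j : Fin m, k j := by
    ring
  rw [this]
  exact Ideal.add_mem _ (Ideal.mul_mem_left _ _ hp) (hBI key)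
end

section
/- Let f ∈ ℤ[X_1,...,X_n] be a nonzero polynomial, let M be a natural number bounding the absolute value of every coefficient of f, let d be its total degree, and set N := max(M, d). If N ≥ 1, then there exists a prime p with N < p ≤ 2N such that the reduction of f modulo p induces a nonzero function on (ℤ/pℤ)^n; that is, there exists v ∈ (ℤ/pℤ)^n with f(v) ≢ 0 (mod p). -/
open MvPolynomial

/-- Bertrand's postulate plus PIT: if `f ∈ ℤ[X_1,...,X_n]` is nonzero, `M` bounds the
absolute values of its coefficients, `d` is its total degree, and `N := max M d ≥ 1`,
then there is a prime `p` with `N < p ≤ 2N` such that the reduction of `f` mod `p`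
induces a nonzero function on `(ZMod p)^n`. -/
theorem stmt_14 (n : ℕ) (f : MvPolynomial (Fin n) ℤ) (hf : f ≠ 0)
    (M : ℕ) (hM : ∀ m : Fin n →₀ ℕ, |f.coeff m| ≤ (M : ℤ))
    (hN : 1 ≤ max M f.totalDegree) :
    ∃ p : ℕ, p.Prime ∧ max M f.totalDegree < p ∧ p ≤ 2 * max M f.totalDegree ∧
      ∃ v : Fin n → ZMod p, eval v (MvPolynomial.map (Int.castRingHom (ZMod p)) f) ≠ 0 := by
  set N := max M f.totalDegree with hNdef
  obtain ⟨p, hp, hlt, hle⟩ := Nat.exists_prime_lt_and_le_two_mul N (by omega)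
  refine ⟨p, hp, hlt, hle, ?_⟩
  haveI : Fact p.Prime := ⟨hp⟩
  by_contra h
  push_neg at h
  have hzero : MvPolynomial.map (Int.castRingHom (ZMod p)) f = 0 := by
    apply MvPolynomial.eq_zero_of_eval_eq_zero (σ := Fin n) (K := ZMod p) _ h
    rw [MvPolynomial.mem_restrictDegree]
    intro m hm i
    have hm' : m ∈ f.support := MvPolynomial.support_map_subset _ _ hm
    have h1 : m i ≤ f.degreeOf i := MvPolynomial.monomial_le_degreeOf i hm'
    have h2 : f.degreeOf i ≤ f.totalDegree := MvPolynomial.degreeOf_le_totalDegree f i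
    have : f.totalDegree ≤ N := le_max_right _ _
    have hcard : Fintype.card (ZMod p) = p := ZMod.card p
    omega
  obtain ⟨m, hm⟩ : ∃ m, f.coeff m ≠ 0 := by
    by_contra hc; push_neg at hc
    exact hf (MvPolynomial.ext _ _ (by simpa using hc))
  have := congrArg (fun g => MvPolynomial.coeff m g) hzero
  simp only [MvPolynomial.coeff_map, MvPolynomial.coeff_zero] at this
  rw [Int.castRingHom, RingHom.coe_mk] at this
  have hdvd : (p : ℤ) ∣ f.coeff m := by
    rwa [← ZMod.intCast_zmod_eq_zero_iff_dvd]
  have habs : (p : ℤ) ≤ |f.coeff m| := Int.le_of_dvd (abs_pos.mpr hm) ((dvd_abs _ _).mpr hdvd)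
  have hMN : (M : ℤ) < p := by exact_mod_cast lt_of_le_of_lt (le_max_left M f.totalDegree) hlt
  exact absurd (le_trans habs (hM m)) (not_le.mpr hMN)
end

section
/- Let R be a commutative ring and b ≥ 1. Work in the polynomial ring R[x_1,...,x_b, y_1,...,y_b]. Suppose F, G ∈ R[x̄, ȳ] and H_1, ..., H_b ∈ R[x̄, ȳ] and C_1, ..., C_b, D_1, ..., D_b ∈ R[x_1,...,x_b] satisfy: (i) F(x̄, 0) = 0 and F(x̄, x_1^2 - x_1, ..., x_b^2 - x_b) = val(C_1,...,C_b) - val(x_1,...,x_b); (ii) G(x̄, 0) = 0 and G(x̄, x_1^2 - x_1, ..., x_b^2 - x_b) = val(D_1,...,D_b) - val(x_1,...,x_b); (iii) for each i, H_i(x̄, 0) = 0 and H_i(x̄, x_1^2 - x_1, ..., x_b^2 - x_b) = D_i^2 - D_i; where val(z_1,...,z_b) := ∑_{i=1}^b 2^i · z_i with 2^i interpreted in R. Then J(x̄, ȳ) := F(D_1(x̄),...,D_b(x̄), H_1(x̄, ȳ),...,H_b(x̄, ȳ)) + G(x̄, ȳ) satisfies J(x̄, 0) = 0 and J(x̄,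 x_1^2 - x_1, ..., x_b^2 - x_b) = val(C_1(D̄),...,C_b(D̄)) - val(x_1,...,x_b), where C_j(D̄) denotes substituting D_i for x_i in C_j. -/
open MvPolynomial

/-- The binary value polynomial `val(z_1,...,z_b) = ∑_{i=1}^b 2^i z_i`
(indexing `Fin b` as `i = 1, ..., b`). -/
noncomputable def boolVal {R : Type*} [CommRing R] {b : ℕ}
    (z : Fin b → MvPolynomial (Fin b) R) : MvPolynomial (Fin b) R :=
  ∑ i : Fin b, (2 : MvPolynomial (Fin b) R) ^ ((i : ℕ) + 1) * z i

lemma aeval_boolVal {R : Type*} [CommRing R] {b : ℕ}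
    (D : Fin b → MvPolynomial (Fin b) R) (z : Fin b → MvPolynomial (Fin b) R) :
    aeval D (boolVal z) = boolVal (fun i => aeval D (z i)) := by
  simp [boolVal, map_sum, map_ofNat]

/-- The Composition Lemma (size bounds omitted): if `F`, `G`, `H_i` are IPS certificates
from the Boolean axioms showing `val(C̄) - val(x̄)`, `val(D̄) - val(x̄)`, and
`D_i^2 - D_i` respectively, then `J(x̄, ȳ) := F(D̄(x̄), H̄(x̄, ȳ)) + G(x̄, ȳ)` is an IPS
certificate from the Boolean axioms for `val(C̄(D̄)) - val(x̄)`.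
Variables: `Sum.inl i` is `x_i`, `Sum.inr i` is the placeholder `y_i`. -/
theorem stmt_16 (R : Type*) [CommRing R] (b : ℕ) (hb : 1 ≤ b)
    (F G : MvPolynomial (Fin b ⊕ Fin b) R)
    (H : Fin b → MvPolynomial (Fin b ⊕ Fin b) R)
    (C D : Fin b → MvPolynomial (Fin b) R)
    (hF0 : aeval (Sum.elim X fun _ => (0 : MvPolynomial (Fin b) R)) F = 0)
    (hF : aeval (Sum.elim X fun i => (X i : MvPolynomial (Fin b) R) ^ 2 - X i) F =
      boolVal C - boolVal X)
    (hG0 : aeval (Sum.elim X fun _ => (0 : MvPolynomial (Fin b) R)) G = 0)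
    (hG : aeval (Sum.elim X fun i => (X i : MvPolynomial (Fin b) R) ^ 2 - X i) G =
      boolVal D - boolVal X)
    (hH0 : ∀ i : Fin b,
      aeval (Sum.elim X fun _ => (0 : MvPolynomial (Fin b) R)) (H i) = 0)
    (hH : ∀ i : Fin b,
      aeval (Sum.elim X fun j => (X j : MvPolynomial (Fin b) R) ^ 2 - X j) (H i) =
        D i ^ 2 - D i) :
    (aeval (Sum.elim X fun _ => (0 : MvPolynomial (Fin b) R))
        (aeval (Sum.elim (fun i => rename Sum.inl (D i)) H) F + G) = 0) ∧
      (aeval (Sum.elim X fun i => (X i : MvPolynomial (Fin b) R) ^ 2 - X i)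
          (aeval (Sum.elim (fun i => rename Sum.inl (D i)) H) F + G) =
        boolVal (fun j => aeval D (C j)) - boolVal X) := by
  set σ : Fin b ⊕ Fin b → MvPolynomial (Fin b ⊕ Fin b) R :=
    Sum.elim (fun i => rename Sum.inl (D i)) H with hσ
  have comp0 :
      aeval (Sum.elim X fun _ => (0 : MvPolynomial (Fin b) R)) (aeval σ F)
        = (aeval D) (aeval (Sum.elim X fun _ => (0 : MvPolynomial (Fin b) R)) F) := by
    rw [← AlgHom.comp_apply, ← AlgHom.comp_apply]
    congr 1
    apply MvPolynomial.algHom_ext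
    rintro (i | i)
    · simp only [AlgHom.comp_apply, aeval_X, hσ, Sum.elim_inl, aeval_rename]
      rw [show ((Sum.elim X fun _ => (0 : MvPolynomial (Fin b) R)) ∘ Sum.inl) = X from rfl,
        aeval_X_left_apply]
    · simp only [AlgHom.comp_apply, aeval_X, hσ, Sum.elim_inr, hH0 i, map_zero]
  have comp1 :
      aeval (Sum.elim X fun i => (X i : MvPolynomial (Fin b) R) ^ 2 - X i) (aeval σ F)
        = (aeval D)
            (aeval (Sum.elim X fun i => (X i : MvPolynomial (Fin b) R) ^ 2 - X i) F) := by
    rw [← AlgHom.comp_apply, ← AlgHom.comp_apply]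
    congr 1
    apply MvPolynomial.algHom_ext
    rintro (i | i)
    · simp only [AlgHom.comp_apply, aeval_X, hσ, Sum.elim_inl, aeval_rename]
      rw [show ((Sum.elim X fun i => (X i : MvPolynomial (Fin b) R) ^ 2 - X i) ∘ Sum.inl)
          = X from rfl, aeval_X_left_apply]
    · simp only [AlgHom.comp_apply, aeval_X, hσ, Sum.elim_inr, hH i, map_sub, map_pow]
  constructor
  · rw [map_add, comp0, hF0, hG0, map_zero, add_zero]
  · rw [map_add, comp1, hF, hG, map_sub, aeval_boolVal, aeval_boolVal]
    have hDX : boolVal (fun i => aeval D (X i : MvPolynomial (Fin b) R)) = boolVal D := by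
      simp
    rw [hDX]
    ring
end
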